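/- If u and v have the same color after t iterations of color refinement started from the constant coloring, then for every k ≤ t, the number of walks of length k starting at u equals the number of walks of length k starting at v. -/

import Mathlib

/-!
Colors only get refined: equal colors at round `t` remain equal at every earlier round `k`.
And the color at round `k` determines the number of length-`k` walks, by induction on `k`:
walks of length `k + 1` from `u` are counted by summing the length-`k` counts over the neighbors
of `u`, and that sum depends only on the multiset of round-`k` colors of the neighbors, which is
part of the round-`(k + 1)` color of `u`.
-/

/-- Type of Weisfeiler-Lehman colors after `t` refinement rounds. -/
def WLType : ℕ → Type
  | 0 => Unit
  | t+1 => WLType t × Multiset (WLType t)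

instance instDecEqWLType : ∀ t, DecidableEq (WLType t)
  | 0 => inferInstanceAs (DecidableEq Unit)
  | t+1 =>
    letI := instDecEqWLType t
    inferInstanceAs (DecidableEq (WLType t × Multiset (WLType t)))

variable {V : Type*} [Fintype V] [DecidableEq V]

/-- The color refinement (1-WL) coloring after `t` iterations, starting from
the constant coloring: `c^{t+1}(v) = (c^t(v), {{c^t(x) | x ∈ N(v)}})`. -/
def wl (G : SimpleGraph V) [DecidableRel G.Adj] : (t : ℕ) → V → WLType t
  | 0, _ => ()
  | t+1, v => (wl G t v, (G.neighborFinset v).val.map (wl G t))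

theorem Function.FactorsThrough.sum_eq_of_map_val_eq {α β M : Type*} [AddCommMonoid M]
    {g : α → M} {f : α → β} (hg : g.FactorsThrough f) {s t : Finset α}
    (hst : s.val.map f = t.val.map f) : ∑ x ∈ s, g x = ∑ x ∈ t, g x := by
  have hsum (r : Finset α) : ∑ x ∈ r, g x = ((r.val.map f).map (extend f g 0)).sum := by
    rw [Multiset.map_map, hg.extend_comp, Finset.sum_map_val]
  rw [hsum, hsum, hst]

namespace SimpleGraph

theorem wl_eq_of_le {W : Type*} [Fintype W] (G : SimpleGraph W) [DecidableRel G.Adj] {m t : ℕ}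
    (hmt : m ≤ t) {u v : W} (h : wl G t u = wl G t v) : wl G m u = wl G m v := by
  induction t, hmt using Nat.le_induction with
  | base => exact h
  | succ t _ ih => exact ih (congrArg Prod.fst h)

variable (G : SimpleGraph V) [DecidableRel G.Adj]

def walkCount (k : ℕ) (u : V) : ℕ :=
  ∑ w : V, (G.adjMatrix ℕ ^ k) u w

theorem walkCount_zero (u : V) : G.walkCount 0 u = 1 := by
  simp [walkCount, Matrix.one_apply]

theorem walkCount_succ (k : ℕ) (u : V) :
    G.walkCount (k + 1) u = ∑ x ∈ G.neighborFinset u, G.walkCount k x := by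
  simp only [walkCount, pow_succ', adjMatrix_mul_apply]
  exact Finset.sum_comm

theorem walkCount_factorsThrough_wl (k : ℕ) : (G.walkCount k).FactorsThrough (wl G k) := by
  induction k with
  | zero => intro u v _; simp only [walkCount_zero]
  | succ k ih =>
    intro u v h
    rw [walkCount_succ, walkCount_succ]
    exact ih.sum_eq_of_map_val_eq (congrArg Prod.snd h)

end SimpleGraph

/-- If `u, v` have the same color after `t` iterations of color refinement, then
for every `k ≤ t` the number of walks of length `k` starting at `u` (row sum of
the `k`-th adjacency-matrix power) equals the number of such walks starting at `v`. -/
theorem colorRefinement_walk_counts (G : SimpleGraph V) [DecidableRel G.Adj]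
    (t : ℕ) (u v : V) (h : wl G t u = wl G t v) :
    ∀ k : ℕ, k ≤ t → ∑ w : V, (G.adjMatrix ℕ ^ k) u w = ∑ w : V, (G.adjMatrix ℕ ^ k) v w :=
  fun _ hk => G.walkCount_factorsThrough_wl _ (G.wl_eq_of_le hk h)
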